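/- arXiv:2010.05315 — 6 statements merged into one kernel-verified Lean document; each statement's English description precedes it below -/
import Mathlib

section
/- Let d be a positive integer, let M_Q, M_K ≥ 0, and let q, k ∈ ℝ^d satisfy ‖q‖₂ ≤ M_Q and ‖k‖₂ ≤ M_K. Then the asymmetrically transformed vectors satisfy ‖F(q) − G(k)‖₂² = 2·(M_Q² + M_K² − ⟨q, k⟩), where ⟨·,·⟩ is the Euclidean inner product. In particular, the squared Euclidean distance of the transformed vectors depends only on the inner product ⟨q, k⟩ and decreases linearly in it. -/
open Finset

/-- The asymmetric transformation `F` applied to a query vector: appends `0` and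
`√(M_Q² + M_K² − ‖q‖₂²)` to `q`. -/
noncomputable def asymF (d : ℕ) (MQ MK : ℝ) (q : Fin d → ℝ) : Fin (d + 2) → ℝ :=
  Fin.append q ![0, Real.sqrt (MQ ^ 2 + MK ^ 2 - ∑ i, q i ^ 2)]

/-- The asymmetric transformation `G` applied to a key vector: appends
`√(M_Q² + M_K² − ‖k‖₂²)` and `0` to `k`. -/
noncomputable def asymG (d : ℕ) (MQ MK : ℝ) (k : Fin d → ℝ) : Fin (d + 2) → ℝ :=
  Fin.append k ![Real.sqrt (MQ ^ 2 + MK ^ 2 - ∑ i, k i ^ 2), 0]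

/-! The squared distance splits into `‖q − k‖²` plus the squares of the two padding
coordinates. Because the paddings of `F` and `G` occupy different slots, these squares are
the full radicands `M_Q² + M_K² − ‖q‖²` and `M_Q² + M_K² − ‖k‖²` (nonnegative by the norm
bounds), and they cancel the terms `‖q‖² + ‖k‖²` of `‖q − k‖² = ‖q‖² − 2⟨q, k⟩ + ‖k‖²`. -/

theorem sum_sq_sub_eq {ι : Type*} (s : Finset ι) (u v : ι → ℝ) :
    ∑ i ∈ s, (u i - v i) ^ 2
      = ∑ i ∈ s, u i ^ 2 - 2 * ∑ i ∈ s, u i * v i + ∑ i ∈ s, v i ^ 2 := by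
  rw [mul_sum, ← sum_sub_distrib, ← sum_add_distrib]
  exact sum_congr rfl fun i _ => by ring

theorem sum_sq_sub_append {m n : ℕ} (u v : Fin m → ℝ) (x y : Fin n → ℝ) :
    ∑ i, (Fin.append u x i - Fin.append v y i) ^ 2
      = ∑ i, (u i - v i) ^ 2 + ∑ j, (x j - y j) ^ 2 := by
  simp only [Fin.sum_univ_add, Fin.append_left, Fin.append_right]

theorem sq_sqrt_sub_sum_sq {ι : Type*} (s : Finset ι) (u : ι → ℝ) {M a : ℝ}
    (hu : Real.sqrt (∑ i ∈ s, u i ^ 2) ≤ M) (ha : M ^ 2 ≤ a) :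
    Real.sqrt (a - ∑ i ∈ s, u i ^ 2) ^ 2 = a - ∑ i ∈ s, u i ^ 2 := by
  have hle : ∑ i ∈ s, u i ^ 2 ≤ M ^ 2 := (Real.sqrt_le_iff.mp hu).2
  exact Real.sq_sqrt (by linarith)

theorem asym_dist_sq_general (d : ℕ) (MQ MK : ℝ)
    (q k : Fin d → ℝ)
    (hq : Real.sqrt (∑ i, q i ^ 2) ≤ MQ) (hk : Real.sqrt (∑ i, k i ^ 2) ≤ MK) :
    ∑ i, (asymF d MQ MK q i - asymG d MQ MK k i) ^ 2
      = 2 * (MQ ^ 2 + MK ^ 2 - ∑ i, q i * k i) := by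
  have hpadQ := sq_sqrt_sub_sum_sq univ q hq (le_add_of_nonneg_right (sq_nonneg MK))
  have hpadK := sq_sqrt_sub_sum_sq univ k hk (le_add_of_nonneg_left (sq_nonneg MQ))
  rw [asymF, asymG, sum_sq_sub_append, sum_sq_sub_eq, Fin.sum_univ_two]
  simp only [Matrix.cons_val_zero, Matrix.cons_val_one]
  linarith

theorem asym_dist_sq (d : ℕ) (hd : 0 < d) (MQ MK : ℝ) (hMQ : 0 ≤ MQ) (hMK : 0 ≤ MK)
    (q k : Fin d → ℝ)
    (hq : Real.sqrt (∑ i, q i ^ 2) ≤ MQ) (hk : Real.sqrt (∑ i, k i ^ 2) ≤ MK) :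
    ∑ i, (asymF d MQ MK q i - asymG d MQ MK k i) ^ 2
      = 2 * (MQ ^ 2 + MK ^ 2 - ∑ i, q i * k i) :=
  asym_dist_sq_general d MQ MK q k hq hk
end

section
/- Let d be a positive integer, let M_Q, M_K ≥ 0, let q₁, q₂ ∈ ℝ^d satisfy ‖q₁‖₂ ≤ M_Q and ‖q₂‖₂ ≤ M_Q, and let k ∈ ℝ^d satisfy ‖k‖₂ ≤ M_K. Then ⟨q₁, k⟩ ≤ ⟨q₂, k⟩ if and only if ‖F(q₂) − G(k)‖₂ ≤ ‖F(q₁) − G(k)‖₂. Thus maximizing the inner product with a key over a set of queries is equivalent to minimizing the Euclidean distance of the transformed vectors. -/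
/-!
Both extra coordinates of `F(q) - G(k)` are square roots of `M_Q² + M_K²` minus a squared norm,
so they cancel the squared norms in `‖q - k‖² = ‖q‖² + ‖k‖² - 2⟨q, k⟩`, leaving
`‖F(q) - G(k)‖² = 2(M_Q² + M_K²) - 2⟨q, k⟩`. The distance is therefore a decreasing function of
the inner product.
-/

open Finset

lemma sum_sq_sub {ι : Type*} (s : Finset ι) (u v : ι → ℝ) :
    ∑ i ∈ s, (u i - v i) ^ 2 = ∑ i ∈ s, u i ^ 2 + ∑ i ∈ s, v i ^ 2 - 2 * ∑ i ∈ s, u i * v i := by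
  rw [mul_sum, ← sum_add_distrib, ← sum_sub_distrib]
  exact sum_congr rfl fun i _ => by ring

lemma sum_sq_asymF_sub_asymG {d : ℕ} {MQ MK : ℝ} {q k : Fin d → ℝ}
    (hq : ∑ i, q i ^ 2 ≤ MQ ^ 2 + MK ^ 2) (hk : ∑ i, k i ^ 2 ≤ MQ ^ 2 + MK ^ 2) :
    ∑ i, (asymF d MQ MK q i - asymG d MQ MK k i) ^ 2
      = 2 * (MQ ^ 2 + MK ^ 2) - 2 * ∑ i, q i * k i := by
  simp only [asymF, asymG, Fin.sum_univ_add, Fin.append_left, Fin.append_right,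
    Fin.sum_univ_two, Matrix.cons_val_zero, Matrix.cons_val_one]
  rw [sum_sq_sub, zero_sub, neg_sq, sub_zero, Real.sq_sqrt (sub_nonneg.mpr hk),
    Real.sq_sqrt (sub_nonneg.mpr hq)]
  ring

theorem asym_mips_iff_nns_general (d : ℕ) (MQ MK : ℝ)
    (q₁ q₂ k : Fin d → ℝ)
    (hq₁ : Real.sqrt (∑ i, q₁ i ^ 2) ≤ MQ) (hq₂ : Real.sqrt (∑ i, q₂ i ^ 2) ≤ MQ)
    (hk : Real.sqrt (∑ i, k i ^ 2) ≤ MK) :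
    (∑ i, q₁ i * k i ≤ ∑ i, q₂ i * k i) ↔
      Real.sqrt (∑ i, (asymF d MQ MK q₂ i - asymG d MQ MK k i) ^ 2)
        ≤ Real.sqrt (∑ i, (asymF d MQ MK q₁ i - asymG d MQ MK k i) ^ 2) := by
  have hq₁' := (Real.sqrt_le_iff.mp hq₁).2.trans (le_add_of_nonneg_right (sq_nonneg MK))
  have hq₂' := (Real.sqrt_le_iff.mp hq₂).2.trans (le_add_of_nonneg_right (sq_nonneg MK))
  have hk' := (Real.sqrt_le_iff.mp hk).2.trans (le_add_of_nonneg_left (sq_nonneg MQ))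
  rw [Real.sqrt_le_sqrt_iff (sum_nonneg fun i _ => sq_nonneg _),
    sum_sq_asymF_sub_asymG hq₁' hk', sum_sq_asymF_sub_asymG hq₂' hk']
  constructor <;> intro h <;> linarith

theorem asym_mips_iff_nns (d : ℕ) (hd : 0 < d) (MQ MK : ℝ) (hMQ : 0 ≤ MQ) (hMK : 0 ≤ MK)
    (q₁ q₂ k : Fin d → ℝ)
    (hq₁ : Real.sqrt (∑ i, q₁ i ^ 2) ≤ MQ) (hq₂ : Real.sqrt (∑ i, q₂ i ^ 2) ≤ MQ)
    (hk : Real.sqrt (∑ i, k i ^ 2) ≤ MK) :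
    (∑ i, q₁ i * k i ≤ ∑ i, q₂ i * k i) ↔
      Real.sqrt (∑ i, (asymF d MQ MK q₂ i - asymG d MQ MK k i) ^ 2)
        ≤ Real.sqrt (∑ i, (asymF d MQ MK q₁ i - asymG d MQ MK k i) ^ 2) :=
  asym_mips_iff_nns_general d MQ MK q₁ q₂ k hq₁ hq₂ hk
end

section
/- Let q_D, q_C be real numbers with 0 < q_C ≤ q_D, let 0 < ε < 1, and assume q_D·(1−ε) < q_C. Define R = 2/(q_D·q_C) − 1/q_C² and ε′ = 1/(1−ε)² − 1. Then (1−ε′)/q_D² < R < (1+ε′)/q_D². -/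
/-!
With `t = q_D / q_C` and `s = 1 / (1 - ε)` one has `R · q_D² = 2t - t² = 1 - (t - 1)²` and
`ε' = s² - 1`, while the hypotheses say exactly `1 ≤ t < s`. So the claim is `(t - 1)² < s² - 1`,
which holds because `(t - 1)² < (s - 1)² ≤ s² - 1`.
-/

lemma two_mul_sub_sq_mem_Ioo {s t : ℝ} (ht : 1 ≤ t) (hts : t < s) :
    2 - s ^ 2 < 2 * t - t ^ 2 ∧ 2 * t - t ^ 2 < s ^ 2 := by
  constructor <;> nlinarith

theorem R_bound_general (qD qC ε : ℝ) (hqC : 0 < qC) (hle : qC ≤ qD)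
    (hε1 : ε < 1) (h : qD * (1 - ε) < qC) :
    (1 - (1 / (1 - ε) ^ 2 - 1)) / qD ^ 2 < 2 / (qD * qC) - 1 / qC ^ 2 ∧
    2 / (qD * qC) - 1 / qC ^ 2 < (1 + (1 / (1 - ε) ^ 2 - 1)) / qD ^ 2 := by
  have hqD : 0 < qD := hqC.trans_le hle
  have ht : 1 ≤ qD / qC := (one_le_div hqC).2 hle
  have hts : qD / qC < 1 / (1 - ε) := by
    rw [div_lt_div_iff₀ hqC (sub_pos.2 hε1)]
    linarith
  have hR : 2 / (qD * qC) - 1 / qC ^ 2 = (2 * (qD / qC) - (qD / qC) ^ 2) / qD ^ 2 := by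
    field_simp
  obtain ⟨hlo, hhi⟩ := two_mul_sub_sq_mem_Ioo ht hts
  rw [hR, ← one_div_pow]
  constructor <;> apply div_lt_div_of_pos_right _ (by positivity) <;> linarith

theorem R_bound (qD qC ε : ℝ) (hqC : 0 < qC) (hle : qC ≤ qD)
    (hε0 : 0 < ε) (hε1 : ε < 1) (h : qD * (1 - ε) < qC) :
    (1 - (1 / (1 - ε) ^ 2 - 1)) / qD ^ 2 < 2 / (qD * qC) - 1 / qC ^ 2 ∧
    2 / (qD * qC) - 1 / qC ^ 2 < (1 + (1 / (1 - ε) ^ 2 - 1)) / qD ^ 2 :=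
  R_bound_general qD qC ε hqC hle hε1 h
end

section
/- Let S be a finite nonempty set and let F, G : S → ℝ with G(c) ≥ 0 for all c ∈ S. Let ε′ ≥ 0 and θ₁, θ₂ > 0, and assume: (i) (1−ε′)·G(c) ≤ F(c) ≤ (1+ε′)·G(c) for all c ∈ S; (ii) for all c, c′ ∈ S, if F(c) > F(c′) then F(c) − F(c′) ≥ θ₂; (iii) G(c) + G(c′) ≤ θ₁ for all c, c′ ∈ S; and (iv) 2ε′θ₁ < θ₂. Then every maximizer of G over S is also a maximizer of F over S. -/
lemma sub_le_mul_add_of_mul_sandwich {ε x y u v : ℝ} (hu : (1 - ε) * x ≤ u)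
    (hv : v ≤ (1 + ε) * y) (hyx : y ≤ x) : v - u ≤ ε * (x + y) := by
  linarith

theorem argmax_transfer_general {ι : Type*} (S : Finset ι)
    (F G : ι → ℝ)
    (ε' θ₁ θ₂ : ℝ) (hε' : 0 ≤ ε') (hθ₂ : 0 < θ₂)
    (hsandwich : ∀ c ∈ S, (1 - ε') * G c ≤ F c ∧ F c ≤ (1 + ε') * G c)
    (hgap : ∀ c ∈ S, ∀ c' ∈ S, F c' < F c → θ₂ ≤ F c - F c')
    (hbound : ∀ c ∈ S, ∀ c' ∈ S, G c + G c' ≤ θ₁)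
    (hsmall : 2 * ε' * θ₁ < θ₂) :
    ∀ c ∈ S, (∀ c' ∈ S, G c' ≤ G c) → (∀ c' ∈ S, F c' ≤ F c) := by
  intro c hc hmax c' hc'
  by_contra! hlt
  have hclose : F c' - F c ≤ ε' * θ₁ :=
    (sub_le_mul_add_of_mul_sandwich (hsandwich c hc).1 (hsandwich c' hc').2 (hmax c' hc')).trans
      (mul_le_mul_of_nonneg_left (hbound c hc c' hc') hε')
  have hfar : θ₂ ≤ F c' - F c := hgap c' hc' c hc hlt
  -- θ₂ ≤ ε'θ₁ < θ₂ / 2 is impossible for θ₂ > 0.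
  linarith [hθ₂]

theorem argmax_transfer {ι : Type*} (S : Finset ι) (hS : S.Nonempty)
    (F G : ι → ℝ) (hG : ∀ c ∈ S, 0 ≤ G c)
    (ε' θ₁ θ₂ : ℝ) (hε' : 0 ≤ ε') (hθ₁ : 0 < θ₁) (hθ₂ : 0 < θ₂)
    (hsandwich : ∀ c ∈ S, (1 - ε') * G c ≤ F c ∧ F c ≤ (1 + ε') * G c)
    (hgap : ∀ c ∈ S, ∀ c' ∈ S, F c' < F c → θ₂ ≤ F c - F c')
    (hbound : ∀ c ∈ S, ∀ c' ∈ S, G c + G c' ≤ θ₁)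
    (hsmall : 2 * ε' * θ₁ < θ₂) :
    ∀ c ∈ S, (∀ c' ∈ S, G c' ≤ G c) → (∀ c' ∈ S, F c' ≤ F c) :=
  argmax_transfer_general S F G ε' θ₁ θ₂ hε' hθ₂ hsandwich hgap hbound hsmall
end

section
/- Let P be a real n×m matrix, and let a clustering assign to each row i a nonempty subset S_i ⊆ {1,…,m} of columns in the same cluster as row i. For each row i let q_{D,i} = Σ_{j=1}^m e^{P_{ij}} and q_{C,i} = Σ_{j∈S_i} e^{P_{ij}}, and let σ(P) denote row-wise softmax of P and σ_C(P) the matrix with entries e^{P_{ij}}/q_{C,i} for j ∈ S_i and 0 for j ∉ S_i. Then ‖σ_C(P) − σ(P)‖_F² = Σ_{i=1}^n Σ_{j=1}^m (e^{P_{ij}}/q_{D,i})² − Σ_{i=1}^n Σ_{j∈S_i} e^{2P_{ij}}·(2/(q_{D,i}·q_{C,i}) − 1/q_{C,i}²). Consequently, minimizing ‖σ_C(P) − σ(P)‖_F² over a family of clusterings is equivalent to maximizing Σ_{i=1}^n Σ_{j∈S_i} e^{2P_{ij}}·(2/(q_{D,i}·q_{C,i}) − 1/q_{C,i}²). -/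
open Finset

/-- Row-wise softmax of a real matrix. -/
noncomputable def rowSoftmax {n m : ℕ} (P : Matrix (Fin n) (Fin m) ℝ) :
    Matrix (Fin n) (Fin m) ℝ :=
  fun i j => Real.exp (P i j) / ∑ j', Real.exp (P i j')

/-- Within-cluster attention matrix: row `i` attends only to the columns in `S i`. -/
noncomputable def clusterSoftmax {n m : ℕ} (P : Matrix (Fin n) (Fin m) ℝ)
    (S : Fin n → Finset (Fin m)) : Matrix (Fin n) (Fin m) ℝ :=
  fun i j => if j ∈ S i then Real.exp (P i j) / ∑ j' ∈ S i, Real.exp (P i j') else 0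

/-- Squared Frobenius norm of a real matrix. -/
def frobSq {n m : ℕ} (A : Matrix (Fin n) (Fin m) ℝ) : ℝ :=
  ∑ i, ∑ j, (A i j) ^ 2

/-- The within-cluster objective `Σ_i Σ_{j ∈ S i} e^{2 P i j} (2/(q_{D,i} q_{C,i}) − 1/q_{C,i}²)`. -/
noncomputable def clusterObjective {n m : ℕ} (P : Matrix (Fin n) (Fin m) ℝ)
    (S : Fin n → Finset (Fin m)) : ℝ :=
  ∑ i, ∑ j ∈ S i, Real.exp (2 * P i j) *
    (2 / ((∑ j', Real.exp (P i j')) * ∑ j' ∈ S i, Real.exp (P i j'))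
      - 1 / (∑ j' ∈ S i, Real.exp (P i j')) ^ 2)

/-!
On a row `i` with `j ∈ S i` the squared error is
`(e/q_C - e/q_D)² = (e/q_D)² - e²·(2/(q_D q_C) - 1/q_C²)`, and off `S i` it is `(e/q_D)²`.
Summing gives the error formula; its first term does not depend on the clustering, so
minimizing the error is the same as maximizing `clusterObjective`.
-/

lemma sum_sq_ite_div_sub_div {ι K : Type*} [Fintype ι] [DecidableEq ι] [Field K]
    (w : ι → K) (s : Finset ι) (C D : K) :
    ∑ j, ((if j ∈ s then w j / C else 0) - w j / D) ^ 2
      = ∑ j, (w j / D) ^ 2 - ∑ j ∈ s, w j ^ 2 * (2 / (D * C) - 1 / C ^ 2) := by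
  have entry : ∀ j, ((if j ∈ s then w j / C else 0) - w j / D) ^ 2
      = (w j / D) ^ 2 - if j ∈ s then w j ^ 2 * (2 / (D * C) - 1 / C ^ 2) else 0 := by
    intro j
    split_ifs <;> ring
  rw [Fintype.sum_congr _ _ entry, sum_sub_distrib, sum_ite_mem, univ_inter]

lemma frobSq_clusterSoftmax_sub_rowSoftmax {n m : ℕ} (P : Matrix (Fin n) (Fin m) ℝ)
    (S : Fin n → Finset (Fin m)) :
    frobSq (clusterSoftmax P S - rowSoftmax P)
      = (∑ i, ∑ j, (Real.exp (P i j) / ∑ j', Real.exp (P i j')) ^ 2)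
          - clusterObjective P S := by
  have exp_two_mul : ∀ x, Real.exp (2 * x) = Real.exp x ^ 2 := fun x => by
    rw [two_mul, Real.exp_add, sq]
  simp only [frobSq, clusterObjective, exp_two_mul, ← sum_sub_distrib]
  exact Fintype.sum_congr _ _ fun i => sum_sq_ite_div_sub_div (fun j => Real.exp (P i j)) _ _ _

theorem cluster_softmax_error_and_min_iff_max {n m : ℕ}
    (P : Matrix (Fin n) (Fin m) ℝ) :
    (∀ S : Fin n → Finset (Fin m), (∀ i, (S i).Nonempty) →
      frobSq (clusterSoftmax P S - rowSoftmax P)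
        = (∑ i, ∑ j, (Real.exp (P i j) / ∑ j', Real.exp (P i j')) ^ 2)
            - clusterObjective P S) ∧
    (∀ (𝒞 : Set (Fin n → Finset (Fin m))), (∀ S ∈ 𝒞, ∀ i, (S i).Nonempty) →
      ∀ S ∈ 𝒞,
        ((∀ S' ∈ 𝒞, frobSq (clusterSoftmax P S - rowSoftmax P)
            ≤ frobSq (clusterSoftmax P S' - rowSoftmax P)) ↔
          (∀ S' ∈ 𝒞, clusterObjective P S' ≤ clusterObjective P S))) := by
  refine ⟨fun S _ => frobSq_clusterSoftmax_sub_rowSoftmax P S, fun 𝒞 _ S _ => ?_⟩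
  simp only [frobSq_clusterSoftmax_sub_rowSoftmax, sub_le_sub_iff_left]
end

section
/- Let K be a finite set, s : K → ℝ a nonnegative weight function with nonempty support K_q = {k ∈ K : s(k) > 0}, and v : K → ℝ^d a value function. Let K₁,…,K_H be subsets of K such that every k ∈ K_q belongs to exactly N of the sets K₁,…,K_H for some fixed integer N ≥ 1, and such that Σ_{k∈K_h} s(k) > 0 for every h. Define o^h = Σ_{k∈K_h} (s(k)/Σ_{k′∈K_h} s(k′))·v(k) and a_h = (Σ_{k∈K_h} s(k)) / (Σ_{n=1}^H Σ_{k′∈K_n} s(k′)). Then the merged output equals the dense attention output: Σ_{h=1}^H a_h·o^h = Σ_{k∈K_q} (s(k)/Σ_{k′∈K_q} s(k′))·v(k). -/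
/-! Swapping the order of summation, a key in exactly `N` of the rounds is counted `N` times, so
`∑ₕ ∑_{k ∈ Kₕ} f k = N ∑_{k ∈ K_q} f k` for every `f` vanishing off `K_q`. Since round `h` contributes
`a_h o^h = (∑_{k ∈ Kₕ} s k • v k) / T` with `T = ∑ₙ ∑_{k ∈ Kₙ} s k`, applying this to `f = s • v` and
to `f = s` shows that numerator and denominator of the merged output both carry the factor `N`. -/

open Finset

namespace Finset

variable {ι κ M : Type*} [DecidableEq ι] [Fintype κ] [AddCommMonoid M]

theorem sum_sum_eq_sum_card_nsmul (K : Finset ι) (Ks : κ → Finset ι) (hKs : ∀ h, Ks h ⊆ K)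
    (f : ι → M) :
    ∑ h, ∑ k ∈ Ks h, f k = ∑ k ∈ K, #{h | k ∈ Ks h} • f k := by
  rw [sum_comm' (t' := K) (s' := fun k => {h | k ∈ Ks h}) fun h k =>
    ⟨fun hk => ⟨by simpa using hk.2, hKs h hk.2⟩, fun hk => ⟨mem_univ h, by simpa using hk.1⟩⟩]
  simp only [sum_const]

theorem sum_sum_eq_nsmul_sum_of_card_eq {K A : Finset ι} (hA : A ⊆ K) (Ks : κ → Finset ι)
    (hKs : ∀ h, Ks h ⊆ K) {N : ℕ} (hcard : ∀ k ∈ A, #{h | k ∈ Ks h} = N) {f : ι → M}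
    (hf : ∀ k ∈ K, k ∉ A → f k = 0) :
    ∑ h, ∑ k ∈ Ks h, f k = N • ∑ k ∈ A, f k := by
  rw [sum_sum_eq_sum_card_nsmul K Ks hKs, smul_sum,
    ← sum_subset hA fun k hk hkA => by rw [hf k hk hkA, smul_zero]]
  exact sum_congr rfl fun k hk => by rw [hcard k hk]

end Finset

theorem Finset.sum_smul_sum_div_sum_smul {ι 𝕜 M : Type*} [Field 𝕜] [AddCommMonoid M] [Module 𝕜 M]
    (B : Finset ι) (w : ι → 𝕜) (v : ι → M) (hw : ∑ k ∈ B, w k ≠ 0) :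
    (∑ k ∈ B, w k) • ∑ k ∈ B, (w k / ∑ k' ∈ B, w k') • v k = ∑ k ∈ B, w k • v k := by
  rw [smul_sum]
  exact sum_congr rfl fun k _ => by rw [smul_smul, mul_div_cancel₀ _ hw]

theorem merged_rounds_exact_general {ι : Type*} [DecidableEq ι] (d : ℕ)
    (K : Finset ι) (s : ι → ℝ) (hs : ∀ k ∈ K, 0 ≤ s k)
    (v : ι → Fin d → ℝ) (H : ℕ)
    (Ks : Fin H → Finset ι) (hKs : ∀ h, Ks h ⊆ K)
    (N : ℕ) (hN : 1 ≤ N)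
    (hfair : ∀ k ∈ K.filter (fun k => 0 < s k),
      ((Finset.univ : Finset (Fin H)).filter (fun h => k ∈ Ks h)).card = N)
    (hpos : ∀ h : Fin H, 0 < ∑ k ∈ Ks h, s k) :
    ∑ h : Fin H,
        ((∑ k ∈ Ks h, s k) / ∑ n : Fin H, ∑ k' ∈ Ks n, s k') •
          ∑ k ∈ Ks h, (s k / ∑ k' ∈ Ks h, s k') • v k
      = ∑ k ∈ K.filter (fun k => 0 < s k),
          (s k / ∑ k' ∈ K.filter (fun k' => 0 < s k'), s k') • v k := by
  set Kq := K.filter (fun k => 0 < s k)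
  set T := ∑ n : Fin H, ∑ k' ∈ Ks n, s k'
  have hvanish : ∀ k ∈ K, k ∉ Kq → s k = 0 := fun k hk hkq =>
    ((hs k hk).eq_of_not_lt fun hpos => hkq (mem_filter.2 ⟨hk, hpos⟩)).symm
  have hmass : T = N • ∑ k ∈ Kq, s k :=
    sum_sum_eq_nsmul_sum_of_card_eq (filter_subset _ K) Ks hKs hfair hvanish
  have hout : ∑ h, ∑ k ∈ Ks h, s k • v k = N • ∑ k ∈ Kq, s k • v k :=
    sum_sum_eq_nsmul_sum_of_card_eq (filter_subset _ K) Ks hKs hfair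
      fun k hk hkq => by rw [hvanish k hk hkq, zero_smul]
  have hN0 : (N : ℝ) ≠ 0 := by exact_mod_cast Nat.one_le_iff_ne_zero.mp hN
  calc _ = T⁻¹ • ∑ h, ∑ k ∈ Ks h, s k • v k := by
        rw [smul_sum]
        refine sum_congr rfl fun h _ => ?_
        rw [div_eq_inv_mul, mul_smul, sum_smul_sum_div_sum_smul _ _ _ (hpos h).ne']
    _ = (∑ k ∈ Kq, s k)⁻¹ • ∑ k ∈ Kq, s k • v k := by
        rw [hout, hmass, nsmul_eq_mul, ← Nat.cast_smul_eq_nsmul ℝ, smul_smul]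
        congr 1
        field_simp
    _ = _ := by
        simp only [smul_sum, smul_smul, div_eq_inv_mul]

theorem merged_rounds_exact {ι : Type*} [DecidableEq ι] (d : ℕ)
    (K : Finset ι) (s : ι → ℝ) (hs : ∀ k ∈ K, 0 ≤ s k)
    (hsupp : (K.filter (fun k => 0 < s k)).Nonempty)
    (v : ι → Fin d → ℝ) (H : ℕ)
    (Ks : Fin H → Finset ι) (hKs : ∀ h, Ks h ⊆ K)
    (N : ℕ) (hN : 1 ≤ N)
    (hfair : ∀ k ∈ K.filter (fun k => 0 < s k),
      ((Finset.univ : Finset (Fin H)).filter (fun h => k ∈ Ks h)).card = N)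
    (hpos : ∀ h : Fin H, 0 < ∑ k ∈ Ks h, s k) :
    ∑ h : Fin H,
        ((∑ k ∈ Ks h, s k) / ∑ n : Fin H, ∑ k' ∈ Ks n, s k') •
          ∑ k ∈ Ks h, (s k / ∑ k' ∈ Ks h, s k') • v k
      = ∑ k ∈ K.filter (fun k => 0 < s k),
          (s k / ∑ k' ∈ K.filter (fun k' => 0 < s k'), s k') • v k :=
  merged_rounds_exact_general d K s hs v H Ks hKs N hN hfair hpos
end
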